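/- Let X, X̃ ⊆ ℂ^n be germs of irreducible complex analytic curves at 0 admitting Puiseux parametrizations ψ(t) = (t^k, φ₂(t), ..., φ_n(t)) and ψ̃(t) = (t^k, φ̃₂(t), ..., φ̃_n(t)) on a disk D_ε, where each φ_i and φ̃_i is analytic with vanishing order strictly greater than k at 0. Then the homeomorphism φ = ψ̃ ∘ ψ⁻¹ : X → X̃ satisfies: for any sequence z_m ∈ X \ {0} with z_m → 0 and z_m/‖z_m‖ → x̄, one has φ(z_m)/‖φ(z_m)‖ → x̄. -/

import Mathlib

/-!
When `b = o(a)`, the normalized vector `‖(a, b)‖⁻¹ • (a, b)` differs from `(‖a‖⁻¹ • a, 0)` by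
`o(1)`. Along `t = s m`, both `ψ` and `ψ̃` have first coordinate `t ^ k` and remaining coordinates
`o(t ^ k)`, so their normalizations are asymptotic to the same sequence and have the same limit.
-/

open Filter Topology Asymptotics

section NormalizedGraph

variable {ι F E : Type*} [NormedAddCommGroup F] [NormedSpace ℝ F]
  [NormedAddCommGroup E] [NormedSpace ℝ E] {l : Filter ι} {a : ι → F}

lemma Asymptotics.IsLittleO.tendsto_inv_norm_smul_prodMk_sub {b : ι → E} (h : b =o[l] a) :
    Tendsto (fun i => ‖(a i, b i)‖⁻¹ • (a i, b i) - (‖a i‖⁻¹ • a i, (0 : E))) l (𝓝 0) := by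
  have hratio : Tendsto (fun i => ‖a i‖⁻¹ • b i) l (𝓝 0) :=
    h.norm_right.tendsto_inv_smul_nhds_zero
  have hnorm : ∀ᶠ i in l, ‖(a i, b i)‖ = ‖a i‖ := by
    filter_upwards [h.bound one_pos] with i hi
    rw [Prod.norm_mk, max_eq_left (by simpa using hi)]
  rw [← Prod.mk_zero_zero]
  refine (tendsto_const_nhds.prodMk_nhds hratio).congr' ?_
  filter_upwards [hnorm] with i hi
  simp [hi]

lemma Asymptotics.IsLittleO.tendsto_inv_norm_smul_prodMk_congr {b b' : ι → E} {x : F × E}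
    (hb : b =o[l] a) (hb' : b' =o[l] a)
    (h : Tendsto (fun i => ‖(a i, b i)‖⁻¹ • (a i, b i)) l (𝓝 x)) :
    Tendsto (fun i => ‖(a i, b' i)‖⁻¹ • (a i, b' i)) l (𝓝 x) := by
  simpa using
    (h.sub hb.tendsto_inv_norm_smul_prodMk_sub).add hb'.tendsto_inv_norm_smul_prodMk_sub

end NormalizedGraph

lemma Asymptotics.isLittleO_of_tendsto_inv_smul {α 𝕜 E : Type*} [NontriviallyNormedField 𝕜]
    [NormedAddCommGroup E] [NormedSpace 𝕜 E] {l : Filter α} {f : α → E} {g : α → 𝕜}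
    (hg : ∀ᶠ x in l, g x ≠ 0) (h : Tendsto (fun x => (g x)⁻¹ • f x) l (𝓝 0)) :
    f =o[l] g :=
  isLittleOTVS_iff_isLittleO.mp <|
    (isLittleOTVS_iff_tendsto_inv_smul (hg.mono fun _ hx h0 => absurd h0 hx)).mpr h

theorem stmt11_general {n : ℕ} (k : ℕ)
    (φ φt : ℂ → EuclideanSpace ℂ (Fin (n - 1)))
    (hφ : Tendsto (fun t : ℂ => (t ^ k)⁻¹ • φ t) (𝓝[≠] 0) (𝓝 0))
    (hφt : Tendsto (fun t : ℂ => (t ^ k)⁻¹ • φt t) (𝓝[≠] 0) (𝓝 0))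
    (ψ ψt : ℂ → ℂ × EuclideanSpace ℂ (Fin (n - 1)))
    (hψ : ∀ t, ψ t = (t ^ k, φ t)) (hψt : ∀ t, ψt t = (t ^ k, φt t))
    (s : ℕ → ℂ) (hs0 : ∀ m, s m ≠ 0) (hs : Tendsto s atTop (𝓝 0))
    (xb : ℂ × EuclideanSpace ℂ (Fin (n - 1)))
    (hlim : Tendsto (fun m => ‖ψ (s m)‖⁻¹ • ψ (s m)) atTop (𝓝 xb)) :
    Tendsto (fun m => ‖ψt (s m)‖⁻¹ • ψt (s m)) atTop (𝓝 xb) := by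
  have hs' : Tendsto s atTop (𝓝[≠] 0) :=
    tendsto_nhdsWithin_of_tendsto_nhds_of_eventually_within s hs (.of_forall hs0)
  have hpow : ∀ᶠ t in 𝓝[≠] (0 : ℂ), t ^ k ≠ 0 :=
    eventually_nhdsWithin_of_forall fun _ ht => pow_ne_zero k ht
  have hφo := (isLittleO_of_tendsto_inv_smul hpow hφ).comp_tendsto hs'
  have hφto := (isLittleO_of_tendsto_inv_smul hpow hφt).comp_tendsto hs'
  simp only [hψ, hψt] at hlim ⊢
  exact hφo.tendsto_inv_norm_smul_prodMk_congr hφto hlim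

/-- Two irreducible curve germs with Puiseux parametrizations `ψ(t) = (t^k, φ(t))` and
`ψ̃(t) = (t^k, φ̃(t))`, where `φ, φ̃ = o(t^k)`, are blow-spherically equivalent via
`ψ̃ ∘ ψ⁻¹`: if `z_m = ψ(s_m) → 0` with `z_m/‖z_m‖ → x̄`, then
`ψ̃(s_m)/‖ψ̃(s_m)‖ → x̄` as well. -/
theorem stmt11 {n : ℕ} (k : ℕ) (hk : 1 ≤ k)
    (φ φt : ℂ → EuclideanSpace ℂ (Fin (n - 1)))
    (hφ : Tendsto (fun t : ℂ => (t ^ k)⁻¹ • φ t) (𝓝[≠] 0) (𝓝 0))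
    (hφt : Tendsto (fun t : ℂ => (t ^ k)⁻¹ • φt t) (𝓝[≠] 0) (𝓝 0))
    (ψ ψt : ℂ → ℂ × EuclideanSpace ℂ (Fin (n - 1)))
    (hψ : ∀ t, ψ t = (t ^ k, φ t)) (hψt : ∀ t, ψt t = (t ^ k, φt t))
    (s : ℕ → ℂ) (hs0 : ∀ m, s m ≠ 0) (hs : Tendsto s atTop (𝓝 0))
    (xb : ℂ × EuclideanSpace ℂ (Fin (n - 1)))
    (hlim : Tendsto (fun m => ‖ψ (s m)‖⁻¹ • ψ (s m)) atTop (𝓝 xb)) :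
    Tendsto (fun m => ‖ψt (s m)‖⁻¹ • ψt (s m)) atTop (𝓝 xb) :=
  stmt11_general k φ φt hφ hφt ψ ψt hψ hψt s hs0 hs xb hlim
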